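/- (Theorem 2.) Let Z and H be countable alphabets, m ≥ 1, and Q a learning kernel assigning to each S ∈ Z^m a pmf Q(·|S) on H. Define the learning capacity C^(m) as the supremum over all probability mass functions P on Z of the mutual affinity I(Z_trn, H) computed under P. Then for every pmf P on Z and every loss function L : H × Z → ℝ with values in [0,1], the true and empirical risks satisfy |R − R_emp| ≤ C^(m). -/

import Mathlib

/-- Total variation distance between two pmfs: `1 - ∑ min`. -/
noncomputable def tv {A : Type*} (p q : A → ℝ) : ℝ := 1 - ∑' a, min (p a) (q a)

/-- `p` is a probability mass function: nonnegative and summing to `1`. -/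
def IsPMF {A : Type*} (p : A → ℝ) : Prop := (∀ a, 0 ≤ p a) ∧ HasSum p 1

/-- Product pmf `P^{⊗m}` of `m` i.i.d. draws from `P`. -/
noncomputable def prodPMF {Z : Type*} (m : ℕ) (P : Z → ℝ) (S : Fin m → Z) : ℝ :=
  ∏ i, P (S i)

/-- Joint pmf of a uniformly drawn training example `Z_trn` and the inferred
hypothesis `H`: `μ(z,h) = ∑_S P^{⊗m}(S) · (1/m)∑_i 1{S_i = z} · Q(h|S)`. -/
noncomputable def jointZH {Z H : Type*} (m : ℕ) (P : Z → ℝ)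
    (Q : (Fin m → Z) → H → ℝ) (z : Z) (h : H) : ℝ :=
  haveI := Classical.decEq Z
  ∑' S : Fin m → Z,
    prodPMF m P S * ((1 / (m : ℝ)) * ∑ i, if S i = z then (1 : ℝ) else 0) * Q S h

/-- Marginal of `Z_trn` under the joint pmf `jointZH`. -/
noncomputable def margZ {Z H : Type*} (m : ℕ) (P : Z → ℝ)
    (Q : (Fin m → Z) → H → ℝ) (z : Z) : ℝ :=
  ∑' h : H, jointZH m P Q z h

/-- Marginal of the hypothesis `H` under the joint pmf `jointZH`. -/
noncomputable def margH {Z H : Type*} (m : ℕ) (P : Z → ℝ)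
    (Q : (Fin m → Z) → H → ℝ) (h : H) : ℝ :=
  ∑' z : Z, jointZH m P Q z h

/-- Mutual affinity `I(Z_trn, H) = ‖μ_Z ⊗ μ_H, μ‖`. -/
noncomputable def affinity {Z H : Type*} (m : ℕ) (P : Z → ℝ)
    (Q : (Fin m → Z) → H → ℝ) : ℝ :=
  tv (fun p : Z × H => margZ m P Q p.1 * margH m P Q p.2)
    (fun p : Z × H => jointZH m P Q p.1 p.2)

/-- True risk `R(𝓛) = ∑_S P^{⊗m}(S) ∑_h Q(h|S) ∑_z P(z)·L(h,z)`. -/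
noncomputable def trueRisk {Z H : Type*} (m : ℕ) (P : Z → ℝ)
    (Q : (Fin m → Z) → H → ℝ) (L : H → Z → ℝ) : ℝ :=
  ∑' S : Fin m → Z, prodPMF m P S * ∑' h : H, Q S h * ∑' z : Z, P z * L h z

/-- Empirical risk `R_emp(𝓛) = ∑_S P^{⊗m}(S) ∑_h Q(h|S)·(1/m)∑_i L(h,S_i)`. -/
noncomputable def empRisk {Z H : Type*} (m : ℕ) (P : Z → ℝ)
    (Q : (Fin m → Z) → H → ℝ) (L : H → Z → ℝ) : ℝ :=
  ∑' S : Fin m → Z, prodPMF m P S * ∑' h : H, Q S h * ((1 / (m : ℝ)) * ∑ i, L h (S i))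

/-- Learning capacity `C^(m)(𝓛) = sup_P I(Z_trn, H)`. -/
noncomputable def capacity {Z H : Type*} (m : ℕ)
    (Q : (Fin m → Z) → H → ℝ) : ℝ :=
  sSup {c : ℝ | ∃ P : Z → ℝ, IsPMF P ∧ c = affinity m P Q}

/-!
Write `μ` for the joint pmf of `(Z_trn, H)`. Each coordinate of an i.i.d. sample has law `P`,
so for `m ≥ 1` the `Z`-marginal of `μ` is `P` itself. Hence the true risk is the expectation of
`L(h, z)` under `μ_Z ⊗ μ_H` and the empirical risk is its expectation under `μ`. Two expectations
of a `[0,1]`-valued function differ by at most the total variation distance of the two pmfs,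
here `I(Z_trn, H) ≤ C^(m)`.

The interchanges of summation are carried out in `ℝ≥0∞`, where they hold unconditionally, and
transported back to `ℝ` through `ENNReal.ofReal`.
-/

open Set
open scoped ENNReal

section PMF

variable {α : Type*} {p q f : α → ℝ}

lemma ENNReal.ofReal_tsum_of_tsum_ofReal_ne_top (hf : ∀ a, 0 ≤ f a)
    (h : ∑' a, ENNReal.ofReal (f a) ≠ ∞) :
    ENNReal.ofReal (∑' a, f a) = ∑' a, ENNReal.ofReal (f a) := by
  refine ENNReal.ofReal_tsum_of_nonneg hf ?_
  simpa only [ENNReal.toReal_ofReal (hf _)] using ENNReal.summable_toReal h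

lemma isPMF_of_tsum_ofReal (hf : ∀ a, 0 ≤ f a) (h : ∑' a, ENNReal.ofReal (f a) = 1) :
    IsPMF f := by
  refine ⟨hf, ?_⟩
  have hs : Summable f := (ENNReal.summable_toReal (h ▸ ENNReal.one_ne_top)).congr
    fun a => ENNReal.toReal_ofReal (hf a)
  have h1 : ENNReal.ofReal (∑' a, f a) = 1 := (ENNReal.ofReal_tsum_of_nonneg hf hs).trans h
  rw [ENNReal.ofReal_eq_one] at h1
  exact h1 ▸ hs.hasSum

namespace IsPMF

lemma tsum_ofReal (hp : IsPMF p) : ∑' a, ENNReal.ofReal (p a) = 1 := by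
  rw [← ENNReal.ofReal_tsum_of_nonneg hp.1 hp.2.summable, hp.2.tsum_eq, ENNReal.ofReal_one]

lemma le_one (hp : IsPMF p) (a : α) : p a ≤ 1 :=
  hp.2.tsum_eq ▸ hp.2.summable.le_tsum a fun b _ => hp.1 b

lemma summable_mul (hp : IsPMF p) (hf : ∀ a, f a ∈ Icc 0 1) : Summable fun a => p a * f a :=
  hp.2.summable.of_nonneg_of_le (fun a => mul_nonneg (hp.1 a) (hf a).1)
    fun a => mul_le_of_le_one_right (hp.1 a) (hf a).2

lemma tsum_mul_mem_Icc (hp : IsPMF p) (hf : ∀ a, f a ∈ Icc 0 1) :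
    ∑' a, p a * f a ∈ Icc 0 1 :=
  ⟨tsum_nonneg fun a => mul_nonneg (hp.1 a) (hf a).1,
    hp.2.tsum_eq ▸ (hp.summable_mul hf).tsum_le_tsum
      (fun a => mul_le_of_le_one_right (hp.1 a) (hf a).2) hp.2.summable⟩

lemma ofReal_tsum_mul (hp : IsPMF p) (hf : ∀ a, f a ∈ Icc 0 1) :
    ENNReal.ofReal (∑' a, p a * f a) = ∑' a, ENNReal.ofReal (p a) * ENNReal.ofReal (f a) := by
  rw [ENNReal.ofReal_tsum_of_nonneg (fun a => mul_nonneg (hp.1 a) (hf a).1)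
    (hp.summable_mul hf)]
  simp only [ENNReal.ofReal_mul (hp.1 _)]

lemma tsum_mul_sub_tsum_mul_mem_Icc (hp : IsPMF p) {r : α → ℝ} (hr : ∀ a, r a ∈ Icc 0 (p a))
    (hf : ∀ a, f a ∈ Icc 0 1) :
    ∑' a, p a * f a - ∑' a, r a * f a ∈ Icc 0 (1 - ∑' a, r a) := by
  have hrs : Summable r := hp.2.summable.of_nonneg_of_le (fun a => (hr a).1) fun a => (hr a).2
  have hrf : Summable fun a => r a * f a :=
    hrs.of_nonneg_of_le (fun a => mul_nonneg (hr a).1 (hf a).1)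
      fun a => mul_le_of_le_one_right (hr a).1 (hf a).2
  have hdiff : ∑' a, p a * f a - ∑' a, r a * f a = ∑' a, (p a - r a) * f a := by
    simp only [sub_mul]
    exact ((hp.summable_mul hf).tsum_sub hrf).symm
  have hmass : ∑' a, (p a - r a) = 1 - ∑' a, r a := by
    rw [hp.2.summable.tsum_sub hrs, hp.2.tsum_eq]
  rw [hdiff, ← hmass]
  exact ⟨tsum_nonneg fun a => mul_nonneg (sub_nonneg.2 (hr a).2) (hf a).1,
    ((hp.summable_mul hf).sub hrf |>.congr fun a => (sub_mul _ _ _).symm).tsum_le_tsum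
      (fun a => mul_le_of_le_one_right (sub_nonneg.2 (hr a).2) (hf a).2)
      (hp.2.summable.sub hrs)⟩

lemma abs_tsum_mul_sub_tsum_mul_le_tv (hp : IsPMF p) (hq : IsPMF q)
    (hf : ∀ a, f a ∈ Icc 0 1) :
    |∑' a, p a * f a - ∑' a, q a * f a| ≤ tv p q := by
  have hrp := hp.tsum_mul_sub_tsum_mul_mem_Icc
    (fun a => ⟨le_min (hp.1 a) (hq.1 a), min_le_left _ _⟩) hf
  have hrq := hq.tsum_mul_sub_tsum_mul_mem_Icc
    (fun a => ⟨le_min (hp.1 a) (hq.1 a), min_le_right _ _⟩) hf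
  rw [tv, abs_sub_le_iff]
  constructor <;> linarith [hrp.1, hrp.2, hrq.1, hrq.2]

end IsPMF

lemma tv_le_one (hp : ∀ a, 0 ≤ p a) (hq : ∀ a, 0 ≤ q a) : tv p q ≤ 1 :=
  sub_le_self _ (tsum_nonneg fun a => le_min (hp a) (hq a))

end PMF

lemma ENNReal.prod_tsum_fin {α : Type*} :
    ∀ {n : ℕ} (g : Fin n → α → ℝ≥0∞),
      ∏ i, ∑' a, g i a = ∑' S : Fin n → α, ∏ i, g i (S i)
  | 0, g => by simp
  | n + 1, g => by
    rw [← (Fin.consEquiv fun _ => α).tsum_eq, ENNReal.tsum_prod', Fin.prod_univ_succ,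
      ENNReal.prod_tsum_fin, ← ENNReal.tsum_mul_right]
    refine tsum_congr fun a => ?_
    rw [← ENNReal.tsum_mul_left]
    refine tsum_congr fun T => ?_
    simp [Fin.consEquiv, Fin.prod_univ_succ]

lemma ENNReal.tsum_mul_tsum_mul_tsum_mul {ι Z H : Type*} (w : ι → ℝ≥0∞)
    (q : ι → H → ℝ≥0∞) (a : ι → Z → ℝ≥0∞) (l : H → Z → ℝ≥0∞) :
    ∑' S, w S * ∑' h, q S h * ∑' z, a S z * l h z
      = ∑' x : Z × H, (∑' S, w S * a S x.1 * q S x.2) * l x.2 x.1 := by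
  simp only [← ENNReal.tsum_mul_left, ← ENNReal.tsum_mul_right, ENNReal.tsum_prod']
  rw [ENNReal.tsum_comm]
  conv_rhs => rw [ENNReal.tsum_comm]
  refine tsum_congr fun h => ?_
  rw [ENNReal.tsum_comm]
  exact tsum_congr fun z => tsum_congr fun S => by ring

section Sample

variable {Z : Type*} [DecidableEq Z] {m : ℕ} {p : Z → ℝ≥0∞}

noncomputable def sampleFreq (S : Fin m → Z) (z : Z) : ℝ≥0∞ :=
  (m : ℝ≥0∞)⁻¹ * ∑ i, if S i = z then 1 else 0

lemma tsum_sampleFreq_mul (S : Fin m → Z) (f : Z → ℝ≥0∞) :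
    ∑' z, sampleFreq S z * f z = (m : ℝ≥0∞)⁻¹ * ∑ i, f (S i) := by
  simp only [sampleFreq, mul_assoc, Finset.sum_mul, ENNReal.tsum_mul_left, ite_mul, one_mul,
    zero_mul, Summable.tsum_finsetSum fun _ _ => ENNReal.summable, tsum_ite_eq']

lemma tsum_sampleFreq (hm : m ≠ 0) (S : Fin m → Z) : ∑' z, sampleFreq S z = 1 := by
  simpa [ENNReal.inv_mul_cancel, hm] using tsum_sampleFreq_mul S 1

lemma tsum_prod_mul_ite_eq (hp : ∑' z, p z = 1) (i : Fin m) (z : Z) :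
    ∑' S : Fin m → Z, (∏ j, p (S j)) * (if S i = z then 1 else 0) = p z := by
  let g (j : Fin m) (w : Z) : ℝ≥0∞ := if j = i ∧ w ≠ z then 0 else p w
  have hg (S : Fin m → Z) :
      (∏ j, p (S j)) * (if S i = z then 1 else 0) = ∏ j, g j (S j) := by
    by_cases hS : S i = z
    · simp only [hS, if_true, mul_one, g]
      exact Finset.prod_congr rfl fun j _ => (if_neg fun hj => hj.2 (hj.1 ▸ hS)).symm
    · simp only [hS, if_false, mul_zero]
      exact (Finset.prod_eq_zero (Finset.mem_univ i) (by simp [g, hS])).symm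
  have hsum (j : Fin m) : ∑' w, g j w = if j = i then p z else 1 := by
    by_cases hj : j = i <;> simp [g, hj, hp]
  simp only [hg, ← ENNReal.prod_tsum_fin, hsum, Finset.prod_ite_eq', Finset.mem_univ, if_true]

lemma tsum_prod_mul_sampleFreq (hm : m ≠ 0) (hp : ∑' z, p z = 1) (z : Z) :
    ∑' S : Fin m → Z, (∏ j, p (S j)) * sampleFreq S z = p z := by
  simp only [sampleFreq, mul_left_comm _ (m : ℝ≥0∞)⁻¹, Finset.mul_sum, ENNReal.tsum_mul_left,
    Summable.tsum_finsetSum fun _ _ => ENNReal.summable, tsum_prod_mul_ite_eq hp]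
  simp [← mul_assoc, ENNReal.mul_inv_cancel, hm]

end Sample

section Joint

variable {Z H : Type*} {m : ℕ} (p : Z → ℝ≥0∞) (q : (Fin m → Z) → H → ℝ≥0∞)

noncomputable def jointMass [DecidableEq Z] (z : Z) (h : H) : ℝ≥0∞ :=
  ∑' S : Fin m → Z, (∏ i, p (S i)) * sampleFreq S z * q S h

noncomputable def hypMass (h : H) : ℝ≥0∞ :=
  ∑' S : Fin m → Z, (∏ i, p (S i)) * q S h

variable {p q}

lemma tsum_jointMass_right [DecidableEq Z] (hm : m ≠ 0) (hp : ∑' z, p z = 1)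
    (hq : ∀ S, ∑' h, q S h = 1) (z : Z) : ∑' h, jointMass p q z h = p z := by
  simp only [jointMass]
  rw [ENNReal.tsum_comm]
  simp only [ENNReal.tsum_mul_left, hq, mul_one, tsum_prod_mul_sampleFreq hm hp]

lemma tsum_jointMass_left [DecidableEq Z] (hm : m ≠ 0) (h : H) :
    ∑' z, jointMass p q z h = hypMass p q h := by
  simp only [jointMass, hypMass]
  rw [ENNReal.tsum_comm]
  simp only [mul_right_comm _ _ (q _ h), ENNReal.tsum_mul_left, tsum_sampleFreq hm, mul_one]

lemma tsum_jointMass [DecidableEq Z] (hm : m ≠ 0) (hp : ∑' z, p z = 1)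
    (hq : ∀ S, ∑' h, q S h = 1) :
    ∑' x : Z × H, jointMass p q x.1 x.2 = 1 := by
  simp only [ENNReal.tsum_prod, tsum_jointMass_right hm hp hq, hp]

lemma tsum_hypMass (hm : m ≠ 0) (hp : ∑' z, p z = 1) (hq : ∀ S, ∑' h, q S h = 1) :
    ∑' h, hypMass p q h = 1 := by
  classical
  simp only [← tsum_jointMass_left hm]
  rw [ENNReal.tsum_comm]
  simp only [tsum_jointMass_right hm hp hq, hp]

lemma tsum_mul_hypMass (hm : m ≠ 0) (hp : ∑' z, p z = 1) (hq : ∀ S, ∑' h, q S h = 1) :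
    ∑' x : Z × H, p x.1 * hypMass p q x.2 = 1 := by
  rw [ENNReal.tsum_prod (f := fun z h => p z * hypMass p q h)]
  simp only [ENNReal.tsum_mul_left, tsum_hypMass hm hp hq, mul_one, hp]

end Joint

section LearningMachine

variable {Z H : Type*} {m : ℕ} {P : Z → ℝ} {Q : (Fin m → Z) → H → ℝ} {L : H → Z → ℝ}

lemma average_mem_Icc {f : Fin m → ℝ} (hf : ∀ i, f i ∈ Icc 0 1) :
    1 / (m : ℝ) * ∑ i, f i ∈ Icc 0 1 := by
  refine ⟨mul_nonneg (by positivity) (Finset.sum_nonneg fun i _ => (hf i).1), ?_⟩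
  calc 1 / (m : ℝ) * ∑ i, f i ≤ 1 / (m : ℝ) * ∑ _i : Fin m, 1 := by
        gcongr with i; exact (hf i).2
    _ ≤ 1 := by by_cases hm : (m : ℝ) = 0 <;> simp [hm]

lemma ofReal_average (hm : m ≠ 0) {f : Fin m → ℝ} (hf : ∀ i, 0 ≤ f i) :
    ENNReal.ofReal (1 / (m : ℝ) * ∑ i, f i) = (m : ℝ≥0∞)⁻¹ * ∑ i, ENNReal.ofReal (f i) := by
  rw [ENNReal.ofReal_mul (by positivity), ENNReal.ofReal_sum_of_nonneg fun i _ => hf i, one_div,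
    ENNReal.ofReal_inv_of_pos (by positivity), ENNReal.ofReal_natCast]

lemma ofReal_prodPMF (hP : ∀ z, 0 ≤ P z) (S : Fin m → Z) :
    ENNReal.ofReal (prodPMF m P S) = ∏ i, ENNReal.ofReal (P (S i)) :=
  ENNReal.ofReal_prod_of_nonneg fun i _ => hP (S i)

lemma isPMF_prodPMF (hP : IsPMF P) : IsPMF (prodPMF m P) := by
  refine isPMF_of_tsum_ofReal (fun S => Finset.prod_nonneg fun i _ => hP.1 (S i)) ?_
  simp only [ofReal_prodPMF hP.1]
  rw [← ENNReal.prod_tsum_fin fun _ z => ENNReal.ofReal (P z)]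
  simp only [hP.tsum_ofReal, Finset.prod_const_one]

lemma jointZH_nonneg (hP : ∀ z, 0 ≤ P z) (hQ : ∀ S h, 0 ≤ Q S h) (z : Z) (h : H) :
    0 ≤ jointZH m P Q z h := by
  classical
  exact tsum_nonneg fun S => mul_nonneg (mul_nonneg (Finset.prod_nonneg fun i _ => hP (S i))
    (average_mem_Icc fun i => by split_ifs <;> simp).1) (hQ S h)

lemma ofReal_jointZH [DecidableEq Z] (hm : m ≠ 0) (hP : IsPMF P) (hQ : ∀ S, IsPMF (Q S))
    (z : Z) (h : H) :
    ENNReal.ofReal (jointZH m P Q z h)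
      = jointMass (fun z => ENNReal.ofReal (P z)) (fun S h => ENNReal.ofReal (Q S h)) z h := by
  have hfreq (S : Fin m → Z) :
      1 / (m : ℝ) * ∑ i, (if S i = z then 1 else 0) ∈ Icc 0 1 :=
    average_mem_Icc fun i => by split_ifs <;> simp
  have hg (S : Fin m → Z) :
      (1 / (m : ℝ) * ∑ i, if S i = z then 1 else 0) * Q S h ∈ Icc 0 1 :=
    ⟨mul_nonneg (hfreq S).1 ((hQ S).1 h),
      mul_le_one₀ (hfreq S).2 ((hQ S).1 h) ((hQ S).le_one h)⟩
  have hjoint : jointZH m P Q z h = ∑' S, prodPMF m P S *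
      ((1 / (m : ℝ) * ∑ i, if S i = z then 1 else 0) * Q S h) := by
    simp only [jointZH, mul_assoc]
    congr!
  rw [hjoint, (isPMF_prodPMF hP).ofReal_tsum_mul hg]
  refine tsum_congr fun S => ?_
  rw [ofReal_prodPMF hP.1, ENNReal.ofReal_mul (hfreq S).1,
    ofReal_average hm fun i => by split_ifs <;> simp]
  simp only [sampleFreq, mul_assoc, apply_ite ENNReal.ofReal, ENNReal.ofReal_one,
    ENNReal.ofReal_zero]

lemma margZ_eq (hm : m ≠ 0) (hP : IsPMF P) (hQ : ∀ S, IsPMF (Q S)) (z : Z) :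
    margZ m P Q z = P z := by
  classical
  have hsum : ∑' h, ENNReal.ofReal (jointZH m P Q z h) = ENNReal.ofReal (P z) := by
    simp only [ofReal_jointZH hm hP hQ]
    exact tsum_jointMass_right hm hP.tsum_ofReal (fun S => (hQ S).tsum_ofReal) z
  have hnonneg := jointZH_nonneg hP.1 (fun S => (hQ S).1) z
  rw [margZ, ← ENNReal.ofReal_eq_ofReal_iff (tsum_nonneg hnonneg) (hP.1 z),
    ENNReal.ofReal_tsum_of_tsum_ofReal_ne_top hnonneg (hsum ▸ ENNReal.ofReal_ne_top), hsum]

lemma ofReal_margH (hm : m ≠ 0) (hP : IsPMF P) (hQ : ∀ S, IsPMF (Q S)) (h : H) :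
    ENNReal.ofReal (margH m P Q h)
      = hypMass (fun z => ENNReal.ofReal (P z)) (fun S h => ENNReal.ofReal (Q S h)) h := by
  classical
  have hsum : ∑' z, ENNReal.ofReal (jointZH m P Q z h)
      = hypMass (fun z => ENNReal.ofReal (P z)) (fun S h => ENNReal.ofReal (Q S h)) h := by
    simp only [ofReal_jointZH hm hP hQ]
    exact tsum_jointMass_left hm h
  have hfinite :
      hypMass (fun z => ENNReal.ofReal (P z)) (fun S h => ENNReal.ofReal (Q S h)) h ≠ ∞ :=
    ne_top_of_le_ne_top ENNReal.one_ne_top <|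
      tsum_hypMass hm hP.tsum_ofReal (fun S => (hQ S).tsum_ofReal) ▸ ENNReal.le_tsum h
  rw [margH, ENNReal.ofReal_tsum_of_tsum_ofReal_ne_top
    (fun z => jointZH_nonneg hP.1 (fun S => (hQ S).1) z h) (hsum ▸ hfinite), hsum]

lemma margZ_nonneg (hP : ∀ z, 0 ≤ P z) (hQ : ∀ S h, 0 ≤ Q S h) (z : Z) : 0 ≤ margZ m P Q z :=
  tsum_nonneg fun h => jointZH_nonneg hP hQ z h

lemma margH_nonneg (hP : ∀ z, 0 ≤ P z) (hQ : ∀ S h, 0 ≤ Q S h) (h : H) : 0 ≤ margH m P Q h :=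
  tsum_nonneg fun z => jointZH_nonneg hP hQ z h

lemma isPMF_margZ_mul_margH (hm : m ≠ 0) (hP : IsPMF P) (hQ : ∀ S, IsPMF (Q S)) :
    IsPMF fun x : Z × H => margZ m P Q x.1 * margH m P Q x.2 := by
  refine isPMF_of_tsum_ofReal (fun x => mul_nonneg (margZ_nonneg hP.1 (fun S => (hQ S).1) x.1)
    (margH_nonneg hP.1 (fun S => (hQ S).1) x.2)) ?_
  simp only [margZ_eq hm hP hQ, ENNReal.ofReal_mul (hP.1 _), ofReal_margH hm hP hQ]
  exact tsum_mul_hypMass hm hP.tsum_ofReal fun S => (hQ S).tsum_ofReal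

lemma isPMF_jointZH (hm : m ≠ 0) (hP : IsPMF P) (hQ : ∀ S, IsPMF (Q S)) :
    IsPMF fun x : Z × H => jointZH m P Q x.1 x.2 := by
  classical
  refine isPMF_of_tsum_ofReal (fun x => jointZH_nonneg hP.1 (fun S => (hQ S).1) x.1 x.2) ?_
  simp only [ofReal_jointZH hm hP hQ]
  exact tsum_jointMass hm hP.tsum_ofReal fun S => (hQ S).tsum_ofReal

lemma trueRisk_eq_tsum (hm : m ≠ 0) (hP : IsPMF P) (hQ : ∀ S, IsPMF (Q S))
    (hL : ∀ h z, L h z ∈ Icc 0 1) :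
    trueRisk m P Q L = ∑' x : Z × H, margZ m P Q x.1 * margH m P Q x.2 * L x.2 x.1 := by
  have hz (h : H) : ∑' z, P z * L h z ∈ Icc 0 1 := hP.tsum_mul_mem_Icc (hL h)
  have hh (S : Fin m → Z) : ∑' h, Q S h * ∑' z, P z * L h z ∈ Icc 0 1 :=
    (hQ S).tsum_mul_mem_Icc hz
  have hprod := isPMF_margZ_mul_margH hm hP hQ
  rw [trueRisk, ← ENNReal.ofReal_eq_ofReal_iff ((isPMF_prodPMF hP).tsum_mul_mem_Icc hh).1
      (hprod.tsum_mul_mem_Icc fun x => hL x.2 x.1).1,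
    (isPMF_prodPMF hP).ofReal_tsum_mul hh, hprod.ofReal_tsum_mul fun x => hL x.2 x.1]
  simp only [ofReal_prodPMF hP.1, (hQ _).ofReal_tsum_mul hz, hP.ofReal_tsum_mul (hL _),
    ENNReal.tsum_mul_tsum_mul_tsum_mul, margZ_eq hm hP hQ, ENNReal.ofReal_mul (hP.1 _),
    ofReal_margH hm hP hQ, hypMass]
  refine tsum_congr fun x => ?_
  rw [← ENNReal.tsum_mul_left]
  exact congrArg (· * _) (tsum_congr fun S => by ring)

lemma empRisk_eq_tsum (hm : m ≠ 0) (hP : IsPMF P) (hQ : ∀ S, IsPMF (Q S))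
    (hL : ∀ h z, L h z ∈ Icc 0 1) :
    empRisk m P Q L = ∑' x : Z × H, jointZH m P Q x.1 x.2 * L x.2 x.1 := by
  classical
  have hS (S : Fin m → Z) (h : H) : 1 / (m : ℝ) * ∑ i, L h (S i) ∈ Icc 0 1 :=
    average_mem_Icc fun i => hL h (S i)
  have hh (S : Fin m → Z) : ∑' h, Q S h * (1 / (m : ℝ) * ∑ i, L h (S i)) ∈ Icc 0 1 :=
    (hQ S).tsum_mul_mem_Icc (hS S)
  have hjoint := isPMF_jointZH hm hP hQ
  rw [empRisk, ← ENNReal.ofReal_eq_ofReal_iff ((isPMF_prodPMF hP).tsum_mul_mem_Icc hh).1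
      (hjoint.tsum_mul_mem_Icc fun x => hL x.2 x.1).1,
    (isPMF_prodPMF hP).ofReal_tsum_mul hh, hjoint.ofReal_tsum_mul fun x => hL x.2 x.1]
  have hfreq (S : Fin m → Z) (h : H) : (m : ℝ≥0∞)⁻¹ * ∑ i, ENNReal.ofReal (L h (S i))
      = ∑' z, sampleFreq S z * ENNReal.ofReal (L h z) :=
    (tsum_sampleFreq_mul S fun z => ENNReal.ofReal (L h z)).symm
  simp only [ofReal_prodPMF hP.1, (hQ _).ofReal_tsum_mul (hS _),
    ofReal_average hm fun i => (hL _ _).1, hfreq, ENNReal.tsum_mul_tsum_mul_tsum_mul,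
    ofReal_jointZH hm hP hQ, jointMass]

lemma affinity_le_capacity (hP : IsPMF P) (hQ : ∀ S, IsPMF (Q S)) :
    affinity m P Q ≤ capacity m Q := by
  refine le_csSup ⟨1, ?_⟩ ⟨P, hP, rfl⟩
  rintro c ⟨P', hP', rfl⟩
  exact tv_le_one (fun x => mul_nonneg (margZ_nonneg hP'.1 (fun S => (hQ S).1) x.1)
    (margH_nonneg hP'.1 (fun S => (hQ S).1) x.2))
    fun x => jointZH_nonneg hP'.1 (fun S => (hQ S).1) x.1 x.2

end LearningMachine

theorem stmt10_general {Z H : Type*} (m : ℕ) (hm : 1 ≤ m)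
    (Q : (Fin m → Z) → H → ℝ) (hQ : ∀ S, IsPMF (Q S)) :
    ∀ P : Z → ℝ, IsPMF P → ∀ L : H → Z → ℝ, (∀ h z, 0 ≤ L h z ∧ L h z ≤ 1) →
      |trueRisk m P Q L - empRisk m P Q L| ≤ capacity m Q := by
  intro P hP L hL
  have hm0 : m ≠ 0 := Nat.one_le_iff_ne_zero.mp hm
  rw [trueRisk_eq_tsum hm0 hP hQ hL, empRisk_eq_tsum hm0 hP hQ hL]
  exact ((isPMF_margZ_mul_margH hm0 hP hQ).abs_tsum_mul_sub_tsum_mul_le_tv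
    (isPMF_jointZH hm0 hP hQ) fun x => hL x.2 x.1).trans (affinity_le_capacity hP hQ)

/-- Theorem 2: for every distribution `P` of observations and
every loss `L : H × Z → [0,1]`, the difference between true and empirical risks
is bounded by the learning capacity `C^(m) = sup_P I(Z_trn, H)`. -/
theorem stmt10 {Z H : Type*} [Countable Z] [Countable H] (m : ℕ) (hm : 1 ≤ m)
    (Q : (Fin m → Z) → H → ℝ) (hQ : ∀ S, IsPMF (Q S)) :
    ∀ P : Z → ℝ, IsPMF P → ∀ L : H → Z → ℝ, (∀ h z, 0 ≤ L h z ∧ L h z ≤ 1) →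
      |trueRisk m P Q L - empRisk m P Q L| ≤ capacity m Q :=
  stmt10_general m hm Q hQ
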